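/- Let M be the symmetric block matrix M = [[M₁₁, M₁₂], [M₁₂ᵀ, Λ + R]] of real matrices, where M₁₁ ∈ ℝ^{p×p} is symmetric positive definite, R ∈ ℝ^{m×m} is symmetric, and Λ = diag(λ₁,…,λ_m) is diagonal. Fix μ with 0 < μ < λ_min(M₁₁) and set K̃_μ := M₁₂ᵀ (M₁₁ - μI)⁻¹ M₁₂. If every diagonal entry satisfies λ_k ≥ μ - λ_min(R - K̃_μ), then M - μI is positive semidefinite, i.e. M ⪰ μI in the Loewner order. -/

import Mathlib

/-!
With `A = M₁₁ - μI`, positive definite since `μ` lies below the spectrum of `M₁₁`, the Schur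
complement criterion reduces `M - μI ⪰ 0` to `Λ + R - μI - M₁₂ᵀ A⁻¹ M₁₂ ⪰ 0`. For
`c = λ_min(R - K̃_μ)` this Schur complement is `(Λ - (μ - c)I) + (R - K̃_μ - cI)`: a diagonal
matrix that is nonnegative by the hypothesis on the `λ_k`, plus a matrix whose spectrum is
shifted to start at `0`.
-/

open Matrix
open scoped MatrixOrder ComplexOrder

namespace Matrix

section Shift

variable {n 𝕜 : Type*} [Fintype n] [DecidableEq n] [RCLike 𝕜] {A : Matrix n n 𝕜}

theorem IsHermitian.spectrum_real_sub_smul_one (hA : A.IsHermitian) (c : ℝ) :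
    spectrum ℝ (A - c • 1) = Set.range fun i => hA.eigenvalues i - c := by
  rw [← Algebra.algebraMap_eq_smul_one, ← spectrum.sub_singleton_eq,
    hA.spectrum_real_eq_range_eigenvalues, Set.sub_singleton, ← Set.range_comp]
  rfl

theorem IsHermitian.posSemidef_sub_smul_one (hA : A.IsHermitian) {c : ℝ}
    (h : ∀ i, c ≤ hA.eigenvalues i) : (A - c • 1).PosSemidef := by
  have hself : IsSelfAdjoint (A - c • 1) := hA.isSelfAdjoint.sub (.smul (.all c) (.one _))
  rw [← nonneg_iff_posSemidef, StarOrderedRing.nonneg_iff_spectrum_nonneg (R := ℝ) _ hself,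
    hA.spectrum_real_sub_smul_one]
  rintro _ ⟨i, rfl⟩
  exact sub_nonneg.2 (h i)

theorem IsHermitian.posDef_sub_smul_one (hA : A.IsHermitian) {c : ℝ}
    (h : ∀ i, c < hA.eigenvalues i) : (A - c • 1).PosDef := by
  have hself : IsSelfAdjoint (A - c • 1) := hA.isSelfAdjoint.sub (.smul (.all c) (.one _))
  rw [← isStrictlyPositive_iff_posDef,
    StarOrderedRing.isStrictlyPositive_iff_spectrum_pos (R := ℝ) _ hself,
    hA.spectrum_real_sub_smul_one]
  rintro _ ⟨i, rfl⟩
  exact sub_pos.2 (h i)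

end Shift

theorem posSemidef_diagonal_sub_smul_one {n 𝕜 : Type*} [DecidableEq n] [RCLike 𝕜] {d : n → 𝕜}
    {c : 𝕜} (h : ∀ i, c ≤ d i) : (diagonal d - c • 1).PosSemidef := by
  rw [smul_one_eq_diagonal, diagonal_sub]
  exact posSemidef_diagonal_iff.2 fun i => sub_nonneg.2 (h i)

theorem fromBlocks_sub_smul_one {l m α : Type*} [DecidableEq l] [DecidableEq m] [Ring α]
    (A : Matrix l l α) (B : Matrix l m α) (C : Matrix m l α) (D : Matrix m m α) (c : α) :
    fromBlocks A B C D - c • 1 = fromBlocks (A - c • 1) B C (D - c • 1) := by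
  ext (i | i) (j | j) <;> simp [one_apply]

end Matrix

theorem block_matrix_loewner_bound_of_rates_general {p m : ℕ}
    (M11 : Matrix (Fin p) (Fin p) ℝ) (hM11 : M11.PosDef)
    (M12 : Matrix (Fin p) (Fin m) ℝ)
    (R : Matrix (Fin m) (Fin m) ℝ)
    (lam : Fin m → ℝ)
    (μ : ℝ) (hμ1 : μ < ⨅ i, hM11.1.eigenvalues i)
    (Ktilde : Matrix (Fin m) (Fin m) ℝ)
    (hKtilde : Ktilde = M12ᵀ * (M11 - μ • (1 : Matrix (Fin p) (Fin p) ℝ))⁻¹ * M12)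
    (hRK : (R - Ktilde).IsHermitian)
    (hlam : ∀ k, lam k ≥ μ - ⨅ i, hRK.eigenvalues i) :
    (Matrix.fromBlocks M11 M12 M12ᵀ (Matrix.diagonal lam + R)
      - μ • (1 : Matrix (Fin p ⊕ Fin m) (Fin p ⊕ Fin m) ℝ)).PosSemidef := by
  set c := ⨅ i, hRK.eigenvalues i
  have hA : (M11 - μ • 1).PosDef :=
    hM11.1.posDef_sub_smul_one fun i => hμ1.trans_le (ciInf_le (Finite.bddBelow_range _) i)
  have := hA.isUnit.invertible
  have hSchur : Matrix.diagonal lam + R - μ • 1 - M12ᴴ * (M11 - μ • 1)⁻¹ * M12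
      = (Matrix.diagonal lam - (μ - c) • 1) + (R - Ktilde - c • 1) := by
    rw [hKtilde, conjTranspose_eq_transpose_of_trivial, sub_smul]
    abel
  rw [fromBlocks_sub_smul_one, ← conjTranspose_eq_transpose_of_trivial,
    PosDef.fromBlocks₁₁ _ _ hA, hSchur]
  exact (posSemidef_diagonal_sub_smul_one fun k => by linarith [hlam k]).add
    (hRK.posSemidef_sub_smul_one fun i => ciInf_le (Finite.bddBelow_range _) i)

/-- Lemma A.1 (2): for the symmetric block matrix
`M = [[M₁₁, M₁₂], [M₁₂ᵀ, Λ + R]]` with `M₁₁ ≻ 0`, `R` symmetric and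
`Λ = diag(λ₁,…,λ_m)`, if `0 < μ < λ_min(M₁₁)` and every
`λ_k ≥ μ - λ_min(R - K̃_μ)` with `K̃_μ = M₁₂ᵀ (M₁₁ - μI)⁻¹ M₁₂`,
then `M ⪰ μI`. -/
theorem block_matrix_loewner_bound_of_rates {p m : ℕ}
    (M11 : Matrix (Fin p) (Fin p) ℝ) (hM11 : M11.PosDef)
    (M12 : Matrix (Fin p) (Fin m) ℝ)
    (R : Matrix (Fin m) (Fin m) ℝ) (hR : R.IsHermitian)
    (lam : Fin m → ℝ)
    (μ : ℝ) (hμ0 : 0 < μ) (hμ1 : μ < ⨅ i, hM11.1.eigenvalues i)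
    (Ktilde : Matrix (Fin m) (Fin m) ℝ)
    (hKtilde : Ktilde = M12ᵀ * (M11 - μ • (1 : Matrix (Fin p) (Fin p) ℝ))⁻¹ * M12)
    (hRK : (R - Ktilde).IsHermitian)
    (hlam : ∀ k, lam k ≥ μ - ⨅ i, hRK.eigenvalues i) :
    (Matrix.fromBlocks M11 M12 M12ᵀ (Matrix.diagonal lam + R)
      - μ • (1 : Matrix (Fin p ⊕ Fin m) (Fin p ⊕ Fin m) ℝ)).PosSemidef :=
  block_matrix_loewner_bound_of_rates_general M11 hM11 M12 R lam μ hμ1 Ktilde hKtilde hRK hlam
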